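/- Strong simulation is a precongruence with respect to parallel composition: if L₂ ⪯ A and L₂, A have the same alphabet, then L₁ ∥ L₂ ⪯ L₁ ∥ A for any LPTS L₁. Specifically, if R ⊆ S₂ × S_A is a strong simulation then {((s₁,s₂),(s₁,t)) | s₁ ∈ S₁, (s₂,t) ∈ R} is a strong simulation between L₁ ∥ L₂ and L₁ ∥ A. -/

import Mathlib

/-!
A move of `L₁` alone is answered by the same move of `L₁` on the right; since `L₂` and `A` have
the same alphabet it is still an interleaving move there, and the idle components give Dirac
distributions related by `R`. A synchronized move or a move of `L₂` alone is answered through the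
simulation of `L₂` by `A`. In every case the step is matched by lifting `μ ⊑_R μ'` to
`ν ⊗ μ ⊑ ν ⊗ μ'`, witnessed by the weight `ν(s₁) · w(s₂, t)` on pairs with equal first
components and `0` off them.
-/

open Finset
open scoped Classical

/-- A discrete probability distribution on a finite set `S`, with rational values. -/
structure PDist (S : Type) [Fintype S] where
  prob : S → ℚ
  nonneg : ∀ s, 0 ≤ prob s
  sum_one : ∑ s, prob s = 1

/-- The product distribution `ν₁ ⊗ ν₂`. -/
def PDist.prod {S₁ S₂ : Type} [Fintype S₁] [Fintype S₂]
    (ν₁ : PDist S₁) (ν₂ : PDist S₂) : PDist (S₁ × S₂) where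
  prob := fun p => ν₁.prob p.1 * ν₂.prob p.2
  nonneg := fun p => mul_nonneg (ν₁.nonneg _) (ν₂.nonneg _)
  sum_one := by
    rw [Fintype.sum_prod_type]
    simp_rw [← Finset.mul_sum]
    simp [ν₂.sum_one, ν₁.sum_one]

/-- The Dirac distribution on `s`. -/
noncomputable def PDist.dirac {S : Type} [Fintype S] (s : S) : PDist S where
  prob := fun t => if t = s then 1 else 0
  nonneg := by intro t; by_cases h : t = s <;> simp [h]
  sum_one := by simp

/-- The lifting `μ₁ ⊑_R μ₂` of a relation `R` to distributions, via a weight function. -/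
def DistLe {S₁ S₂ : Type} [Fintype S₁] [Fintype S₂]
    (R : S₁ → S₂ → Prop) (μ₁ : PDist S₁) (μ₂ : PDist S₂) : Prop :=
  ∃ w : S₁ → S₂ → ℚ,
    (∀ s₁ s₂, 0 ≤ w s₁ s₂ ∧ w s₁ s₂ ≤ 1) ∧
    (∀ s₁, μ₁.prob s₁ = ∑ s₂, w s₁ s₂) ∧
    (∀ s₂, μ₂.prob s₂ = ∑ s₁, w s₁ s₂) ∧
    (∀ s₁ s₂, 0 < w s₁ s₂ → R s₁ s₂)

/-- A labeled probabilistic transition system over states `S`, with an explicit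
alphabet `alpha ⊆ A`. -/
structure LPTS (S A : Type) [Fintype S] where
  start : S
  alpha : Set A
  trans : S → A → PDist S → Prop

/-- `R` is a strong simulation between `L₁` and `L₂`. -/
def IsStrongSim {S₁ S₂ A : Type} [Fintype S₁] [Fintype S₂]
    (L₁ : LPTS S₁ A) (L₂ : LPTS S₂ A) (R : S₁ → S₂ → Prop) : Prop :=
  ∀ s₁ s₂, R s₁ s₂ → ∀ a μ₁, L₁.trans s₁ a μ₁ →
    ∃ μ₂, L₂.trans s₂ a μ₂ ∧ DistLe R μ₁ μ₂

/-- `L₁ ⪯ L₂`: simulation conformance. -/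
def Sim {S₁ S₂ A : Type} [Fintype S₁] [Fintype S₂]
    (L₁ : LPTS S₁ A) (L₂ : LPTS S₂ A) : Prop :=
  ∃ R, IsStrongSim L₁ L₂ R ∧ R L₁.start L₂.start

/-- Parallel composition `L₁ ∥ L₂`: synchronization on shared actions via product
distributions, interleaving (with a Dirac distribution on the idle component) on
non-shared actions. -/
noncomputable def parComp {S₁ S₂ A : Type} [Fintype S₁] [Fintype S₂]
    (L₁ : LPTS S₁ A) (L₂ : LPTS S₂ A) : LPTS (S₁ × S₂) A where
  start := (L₁.start, L₂.start)
  alpha := L₁.alpha ∪ L₂.alpha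
  trans := fun p a μ =>
    (∃ μ₁ μ₂, L₁.trans p.1 a μ₁ ∧ L₂.trans p.2 a μ₂ ∧ μ = μ₁.prod μ₂) ∨
    (∃ μ₁, L₁.trans p.1 a μ₁ ∧ a ∉ L₂.alpha ∧ μ = μ₁.prod (PDist.dirac p.2)) ∨
    (∃ μ₂, a ∉ L₁.alpha ∧ L₂.trans p.2 a μ₂ ∧ μ = (PDist.dirac p.1).prod μ₂)

lemma PDist.prob_le_one {S : Type} [Fintype S] (μ : PDist S) (s : S) : μ.prob s ≤ 1 :=
  μ.sum_one ▸ Finset.single_le_sum (fun t _ => μ.nonneg t) (Finset.mem_univ s)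

namespace DistLe

variable {S₁ S₂ : Type} [Fintype S₁] [Fintype S₂] {R : S₁ → S₂ → Prop}

lemma dirac {s : S₁} {t : S₂} (h : R s t) : DistLe R (PDist.dirac s) (PDist.dirac t) := by
  refine ⟨fun x y => if x = s ∧ y = t then 1 else 0, fun x y => ?_, fun x => ?_, fun y => ?_,
    fun x y hw => ?_⟩
  · dsimp only
    split_ifs <;> norm_num
  · by_cases hx : x = s <;> simp [PDist.dirac, hx]
  · by_cases hy : y = t <;> simp [PDist.dirac, hy]
  · obtain ⟨rfl, rfl⟩ : x = s ∧ y = t := by by_contra hxy; simp [hxy] at hw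
    exact h

lemma prod_left {S₀ : Type} [Fintype S₀] (μ₀ : PDist S₀) {μ₁ : PDist S₁} {μ₂ : PDist S₂}
    (h : DistLe R μ₁ μ₂) :
    DistLe (fun p q => p.1 = q.1 ∧ R p.2 q.2) (μ₀.prod μ₁) (μ₀.prod μ₂) := by
  obtain ⟨w, hw, hμ₁, hμ₂, hR⟩ := h
  refine ⟨fun p q => if p.1 = q.1 then μ₀.prob p.1 * w p.2 q.2 else 0,
    fun p q => ?_, fun p => ?_, fun q => ?_, fun p q hpos => ?_⟩
  · dsimp only
    split_ifs
    · exact ⟨mul_nonneg (μ₀.nonneg _) (hw _ _).1,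
        mul_le_one₀ (μ₀.prob_le_one _) (hw _ _).1 (hw _ _).2⟩
    · norm_num
  · simp [Fintype.sum_prod_type, PDist.prod, ← Finset.mul_sum, hμ₁]
  · simp [Fintype.sum_prod_type, PDist.prod, ← Finset.mul_sum, hμ₂]
  · dsimp only at hpos ⊢
    by_cases hpq : p.1 = q.1
    · rw [if_pos hpq] at hpos
      exact ⟨hpq, hR _ _ (pos_of_mul_pos_right hpos (μ₀.nonneg _))⟩
    · simp [hpq] at hpos

end DistLe

lemma IsStrongSim.parComp_left {S₀ S₁ S₂ A : Type} [Fintype S₀] [Fintype S₁] [Fintype S₂]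
    (L₀ : LPTS S₀ A) {L₁ : LPTS S₁ A} {L₂ : LPTS S₂ A} {R : S₁ → S₂ → Prop}
    (halpha : L₁.alpha = L₂.alpha) (hR : IsStrongSim L₁ L₂ R) :
    IsStrongSim (parComp L₀ L₁) (parComp L₀ L₂) (fun p q => p.1 = q.1 ∧ R p.2 q.2) := by
  rintro ⟨s₀, s₁⟩ ⟨_, s₂⟩ ⟨rfl, hs⟩ a μ
    (⟨μ₀, μ₁, h₀, h₁, rfl⟩ | ⟨μ₀, h₀, ha, rfl⟩ | ⟨μ₁, ha, h₁, rfl⟩)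
  · obtain ⟨μ₂, h₂, hle⟩ := hR _ _ hs a μ₁ h₁
    exact ⟨μ₀.prod μ₂, Or.inl ⟨μ₀, μ₂, h₀, h₂, rfl⟩, hle.prod_left μ₀⟩
  · exact ⟨μ₀.prod (PDist.dirac s₂), Or.inr (Or.inl ⟨μ₀, h₀, halpha ▸ ha, rfl⟩),
      (DistLe.dirac hs).prod_left μ₀⟩
  · obtain ⟨μ₂, h₂, hle⟩ := hR _ _ hs a μ₁ h₁
    exact ⟨(PDist.dirac s₀).prod μ₂, Or.inr (Or.inr ⟨μ₂, ha, h₂, rfl⟩),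
      hle.prod_left (PDist.dirac s₀)⟩

/-- Strong simulation is a precongruence w.r.t. parallel composition: if `R` is a strong
simulation between `L₂` and `As` (which share the same alphabet), then the product
relation is a strong simulation between `L₁ ∥ L₂` and `L₁ ∥ As`; consequently
`L₂ ⪯ As` implies `L₁ ∥ L₂ ⪯ L₁ ∥ As`. -/
theorem parComp_precongruence {S₁ S₂ SA Act : Type}
    [Fintype S₁] [Fintype S₂] [Fintype SA]
    (L₁ : LPTS S₁ Act) (L₂ : LPTS S₂ Act) (As : LPTS SA Act)
    (halpha : L₂.alpha = As.alpha) :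
    (∀ R : S₂ → SA → Prop, IsStrongSim L₂ As R →
      IsStrongSim (parComp L₁ L₂) (parComp L₁ As)
        (fun p q => p.1 = q.1 ∧ R p.2 q.2)) ∧
    (Sim L₂ As → Sim (parComp L₁ L₂) (parComp L₁ As)) := by
  refine ⟨fun R hR => hR.parComp_left L₁ halpha, ?_⟩
  rintro ⟨R, hR, hstart⟩
  exact ⟨_, hR.parComp_left L₁ halpha, rfl, hstart⟩
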